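/- arXiv:math/0602510 — 4 statements merged into one kernel-verified Lean document; each statement's English description precedes it below -/
import Mathlib

section
/- Let B : x → x and B' : x → x be 1-endomorphisms of an object x in a strict 2-category, both equivalences with chosen quasi-inverse data. Then the conjugation bijection of categorical traces satisfies ψ(B'∘B) = ψ(B') ∘ ψ(B), where B'∘B is equipped with the composite quasi-inverse data, and ψ(1_x) = id. -/
open CategoryTheory

universe v u

variable {V : Type u} [Category.{v} V]

/-- The conjugation map `ψ(B) : Tr(A) → Tr(BAC)` of categorical traces,
`φ ↦ (B ∘₀ φ ∘₀ C) ∘₁ u`, for an endomorphism `A` and an equivalence `B` with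
quasi-inverse data `(C, u : 1 ⇒ BC)`.  (Here 1-morphisms are endofunctors of `V`,
`B ∘ C` in the paper's right-to-left convention is `c ⋙ b`.) -/
def psi (A b c : V ⥤ V) (u : 𝟭 V ⟶ c ⋙ b) :
    (𝟭 V ⟶ A) → (𝟭 V ⟶ c ⋙ (A ⋙ b)) :=
  fun φ => u ≫ Functor.whiskerLeft c (b.leftUnitor.inv ≫ Functor.whiskerRight φ b)

/-- The quasi-inverse datum `(B' ∘ B, C ∘ C', (B' ∘₀ u ∘₀ C') ∘₁ u')` for the composite
of two equivalences `(B, C, u)` and `(B', C', u')`. -/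
def compositeU (b c b' c' : V ⥤ V) (u : 𝟭 V ⟶ c ⋙ b) (u' : 𝟭 V ⟶ c' ⋙ b') :
    𝟭 V ⟶ (c' ⋙ c) ⋙ (b ⋙ b') :=
  u' ≫ Functor.whiskerLeft c' (b'.leftUnitor.inv ≫ Functor.whiskerRight u b')

@[simp]
lemma psi_app (A b c : V ⥤ V) (u : 𝟭 V ⟶ c ⋙ b) (φ : 𝟭 V ⟶ A) (X : V) :
    (psi A b c u φ).app X = u.app X ≫ b.map (φ.app (c.obj X)) := by
  simp [psi]

@[simp]
lemma compositeU_app (b c b' c' : V ⥤ V) (u : 𝟭 V ⟶ c ⋙ b) (u' : 𝟭 V ⟶ c' ⋙ b') (X : V) :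
    (compositeU b c b' c' u u').app X = u'.app X ≫ b'.map (u.app (c'.obj X)) := by
  simp [compositeU]

lemma psi_compositeU (A b c b' c' : V ⥤ V) (u : 𝟭 V ⟶ c ⋙ b) (u' : 𝟭 V ⟶ c' ⋙ b')
    (φ : 𝟭 V ⟶ A) :
    psi A (b ⋙ b') (c' ⋙ c) (compositeU b c b' c' u u') φ =
      psi (c ⋙ (A ⋙ b)) b' c' u' (psi A b c u φ) := by
  ext X
  simp only [psi_app, compositeU_app, Functor.comp_obj, Functor.comp_map, Functor.map_comp,
    Category.assoc]

lemma psi_id (A : V ⥤ V) (φ : 𝟭 V ⟶ A) :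
    psi A (𝟭 V) (𝟭 V) ((𝟭 V).leftUnitor.inv) φ = φ := by
  ext X
  simp only [psi_app, Functor.leftUnitor_inv_app, Functor.id_obj, Functor.id_map, Category.id_comp]

theorem psi_comp_and_id_general (A b c b' c' : V ⥤ V)
    (u : 𝟭 V ≅ c ⋙ b)
    (u' : 𝟭 V ≅ c' ⋙ b') :
    (∀ φ : 𝟭 V ⟶ A,
      psi A (b ⋙ b') (c' ⋙ c) (compositeU b c b' c' u.hom u'.hom) φ =
        psi (c ⋙ (A ⋙ b)) b' c' u'.hom (psi A b c u.hom φ)) ∧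
    (∀ φ : 𝟭 V ⟶ A, psi A (𝟭 V) (𝟭 V) ((𝟭 V).leftUnitor.inv) φ = φ) :=
  ⟨psi_compositeU A b c b' c' u.hom u'.hom, psi_id A⟩

/-- **Multiplicativity of the conjugation maps of categorical traces.**
For composable self-equivalences `B, B'` of `x` (here: endofunctors of `V`) with
quasi-inverse data `(C,u,v)`, `(C',u',v')`, equipping `B' ∘ B` with the composite
quasi-inverse data one has `ψ(B' ∘ B) = ψ(B') ∘ ψ(B)`, and `ψ(1_x) = id`. -/
theorem psi_comp_and_id (A b c b' c' : V ⥤ V)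
    (u : 𝟭 V ≅ c ⋙ b) (v : 𝟭 V ≅ b ⋙ c)
    (u' : 𝟭 V ≅ c' ⋙ b') (v' : 𝟭 V ≅ b' ⋙ c') :
    (∀ φ : 𝟭 V ⟶ A,
      psi A (b ⋙ b') (c' ⋙ c) (compositeU b c b' c' u.hom u'.hom) φ =
        psi (c ⋙ (A ⋙ b)) b' c' u'.hom (psi A b c u.hom φ)) ∧
    (∀ φ : 𝟭 V ⟶ A, psi A (𝟭 V) (𝟭 V) ((𝟭 V).leftUnitor.inv) φ = φ) :=
  psi_comp_and_id_general A b c b' c' u u'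
end

section
/- A 2-matrix A = ‖A_{ij}‖ of size n×n over a field k (i.e., an n×n matrix of finite-dimensional k-vector spaces, with composition given by (A∘B)_{ij} = ⊕_l A_{il} ⊗ B_{lj}) is quasi-invertible (an equivalence in the 2-category 2Vect_k) if and only if there exists a permutation σ ∈ S_n such that A_{ij} = 0 for i ≠ σ(j) and dim A_{σ(j),j} = 1 for all j. -/
open CategoryTheory
open scoped DirectSum TensorProduct

/-- Composition of 2-matrices of vector spaces: `(A ∘ B)_{ij} = ⊕_l A_{il} ⊗ B_{lj}`. -/
noncomputable def compEntry {k : Type} [Field k] {n : ℕ}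
    (A B : Fin n → Fin n → ModuleCat.{0} k) (i j : Fin n) : ModuleCat.{0} k :=
  ModuleCat.of k (⨁ l : Fin n, TensorProduct k (A i l) (B l j))

/-- The identity 2-matrix: `k` on the diagonal, `0` off the diagonal. -/
noncomputable def idEntry (k : Type) [Field k] {n : ℕ} (i j : Fin n) : ModuleCat.{0} k :=
  if i = j then ModuleCat.of k k else ModuleCat.of k PUnit

/-- A 2-matrix `A` is quasi-invertible if there is a 2-matrix `B` together with
entrywise 2-isomorphisms `A ∘ B ≅ 1` and `B ∘ A ≅ 1`. -/
noncomputable def IsQuasiInvertible {k : Type} [Field k] {n : ℕ}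
    (A : Fin n → Fin n → ModuleCat.{0} k) : Prop :=
  ∃ B : Fin n → Fin n → ModuleCat.{0} k,
    (∀ i j, FiniteDimensional k (B i j)) ∧
    (∀ i j, Nonempty ((compEntry A B i j) ≃ₗ[k] idEntry k i j)) ∧
    (∀ i j, Nonempty ((compEntry B A i j) ≃ₗ[k] idEntry k i j))

lemma idEntry_pos {k : Type} [Field k] {n : ℕ} {i j : Fin n} (h : i = j) :
    idEntry k i j = ModuleCat.of k k := by
  unfold idEntry; rw [if_pos h]

lemma idEntry_neg {k : Type} [Field k] {n : ℕ} {i j : Fin n} (h : i ≠ j) :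
    idEntry k i j = ModuleCat.of k PUnit := by
  unfold idEntry; rw [if_neg h]

lemma finrank_idEntry {k : Type} [Field k] {n : ℕ} (i j : Fin n) :
    Module.finrank k (idEntry k i j) = if i = j then 1 else 0 := by
  by_cases h : i = j
  · rw [idEntry_pos h, if_pos h]
    exact Module.finrank_self k
  · rw [idEntry_neg h, if_neg h]
    exact Module.finrank_zero_of_subsingleton

instance {k : Type} [Field k] {n : ℕ} (i j : Fin n) : FiniteDimensional k (idEntry k i j) := by
  by_cases h : i = j
  · rw [idEntry_pos h]; infer_instance
  · rw [idEntry_neg h]; infer_instance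

lemma finrank_compEntry {k : Type} [Field k] {n : ℕ}
    (A B : Fin n → Fin n → ModuleCat.{0} k)
    (hA : ∀ i j, FiniteDimensional k (A i j)) (hB : ∀ i j, FiniteDimensional k (B i j))
    (i j : Fin n) :
    Module.finrank k (compEntry A B i j)
      = ∑ l : Fin n, Module.finrank k (A i l) * Module.finrank k (B l j) := by
  haveI := hA
  haveI := hB
  show Module.finrank k (⨁ l : Fin n, TensorProduct k (A i l) (B l j)) = _
  rw [Module.finrank_directSum]
  exact Finset.sum_congr rfl fun l _ => Module.finrank_tensorProduct

instance finiteDimensional_compEntry {k : Type} [Field k] {n : ℕ}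
    (A B : Fin n → Fin n → ModuleCat.{0} k)
    [hA : ∀ i j, FiniteDimensional k (A i j)] [hB : ∀ i j, FiniteDimensional k (B i j)]
    (i j : Fin n) : FiniteDimensional k (compEntry A B i j) :=
  Module.Finite.equiv (DirectSum.linearEquivFunOnFintype k (Fin n)
    (fun l => TensorProduct k (A i l) (B l j))).symm

/-- A `ℕ`-matrix with a two-sided `ℕ`-inverse is a permutation matrix. -/
lemma perm_of_nat_inverse {n : ℕ} (M N : Fin n → Fin n → ℕ)
    (h1 : ∀ i j, ∑ l : Fin n, M i l * N l j = if i = j then 1 else 0)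
    (h2 : ∀ i j, ∑ l : Fin n, N i l * M l j = if i = j then 1 else 0) :
    ∃ σ : Equiv.Perm (Fin n),
      (∀ i j, i ≠ σ j → M i j = 0) ∧ (∀ j, M (σ j) j = 1) := by
  -- if `M l j ≠ 0` then the `l`-th column of `N` is supported at `j`
  have key : ∀ j l, M l j ≠ 0 → ∀ j', j' ≠ j → N j' l = 0 := by
    intro j l hMl j' hj'
    have h := h2 j' j
    rw [if_neg hj'] at h
    have h := (Finset.sum_eq_zero_iff.mp h) l (Finset.mem_univ l)
    rcases Nat.mul_eq_zero.mp h with h | h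
    · exact h
    · exact absurd h hMl
  -- choose the support of each column of `M`
  have hchoice : ∀ j : Fin n, ∃ l, N j l ≠ 0 ∧ M l j ≠ 0 := by
    intro j
    have hs : ∑ l : Fin n, N j l * M l j ≠ 0 := by
      rw [h2 j j, if_pos rfl]; exact one_ne_zero
    obtain ⟨l, _, hl⟩ := Finset.exists_ne_zero_of_sum_ne_zero hs
    rcases Nat.mul_ne_zero_iff.mp hl with ⟨ha, hb⟩
    exact ⟨l, ha, hb⟩
  choose f hfN hfM using hchoice
  -- off-support entries of `M` vanish
  have hzero : ∀ i j, i ≠ f j → M i j = 0 := by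
    intro i j hij
    have hsum := h1 i (f j)
    rw [if_neg hij] at hsum
    have h := (Finset.sum_eq_zero_iff.mp hsum) j (Finset.mem_univ j)
    rcases Nat.mul_eq_zero.mp h with h | h
    · exact h
    · exact absurd h (hfN j)
  -- diagonal entries are 1
  have hone : ∀ j, M (f j) j = 1 := by
    intro j
    have hsum := h1 (f j) (f j)
    rw [if_pos rfl, Finset.sum_eq_single j
      (fun l _ hl => by rw [key j (f j) (hfM j) l hl, mul_zero])
      (fun h => absurd (Finset.mem_univ j) h)] at hsum
    exact Nat.eq_one_of_mul_eq_one_right hsum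
  -- `f` is injective
  have hinj : Function.Injective f := by
    intro j j' h
    by_contra hne
    have hk := key j' (f j') (hfM j') j hne
    rw [← h] at hk
    exact hfN j hk
  exact ⟨Equiv.ofBijective f (Finite.injective_iff_bijective.mp hinj), hzero, hone⟩

/-- **Quasi-invertible 2-matrices are permutation matrices of lines.**
An `n × n` 2-matrix of finite-dimensional `k`-vector spaces is quasi-invertible in
`2Vect_k` if and only if there is a permutation `σ ∈ S_n` with `A_{ij} = 0` for
`i ≠ σ(j)` and `dim A_{σ(j) j} = 1` for all `j`. -/
theorem quasiInvertible_iff_perm {k : Type} [Field k] {n : ℕ}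
    (A : Fin n → Fin n → ModuleCat.{0} k) (hA : ∀ i j, FiniteDimensional k (A i j)) :
    IsQuasiInvertible A ↔
      ∃ σ : Equiv.Perm (Fin n),
        (∀ i j, i ≠ σ j → Module.finrank k (A i j) = 0) ∧
        (∀ j, Module.finrank k (A (σ j) j) = 1) := by
  constructor
  · rintro ⟨B, hB, hAB, hBA⟩
    have e1 : ∀ i j, ∑ l : Fin n, Module.finrank k (A i l) * Module.finrank k (B l j)
        = if i = j then 1 else 0 := by
      intro i j
      rw [← finrank_compEntry A B hA hB i j, ← finrank_idEntry (k := k) i j]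
      exact LinearEquiv.finrank_eq (R := k) ((hAB i j).some)
    have e2 : ∀ i j, ∑ l : Fin n, Module.finrank k (B i l) * Module.finrank k (A l j)
        = if i = j then 1 else 0 := by
      intro i j
      rw [← finrank_compEntry B A hB hA i j, ← finrank_idEntry (k := k) i j]
      exact LinearEquiv.finrank_eq (R := k) ((hBA i j).some)
    exact perm_of_nat_inverse _ _ e1 e2
  · rintro ⟨σ, hz, ho⟩
    haveI := hA
    refine ⟨fun l j => A j l, fun i j => hA j i, ?_, ?_⟩
    · intro i j
      rw [FiniteDimensional.nonempty_linearEquiv_iff_finrank_eq,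
        finrank_compEntry A _ hA (fun i j => hA j i) i j, finrank_idEntry]
      by_cases hij : i = j
      · subst hij
        rw [if_pos rfl, Finset.sum_eq_single (σ.symm i)]
        · have hh := ho (σ.symm i)
          rw [Equiv.apply_symm_apply] at hh
          simp [hh]
        · intro l _ hl
          rw [hz i l (fun h => hl (by rw [h, Equiv.symm_apply_apply])), zero_mul]
        · exact fun h => absurd (Finset.mem_univ _) h
      · rw [if_neg hij]
        apply Finset.sum_eq_zero
        intro l _
        by_cases hil : i = σ l
        · rw [hz j l (fun h => hij (hil.trans h.symm)), mul_zero]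
        · rw [hz i l hil, zero_mul]
    · intro i j
      rw [FiniteDimensional.nonempty_linearEquiv_iff_finrank_eq,
        finrank_compEntry _ A (fun i j => hA j i) hA i j, finrank_idEntry]
      by_cases hij : i = j
      · subst hij
        rw [if_pos rfl, Finset.sum_eq_single (σ i)]
        · simp [ho]
        · intro l _ hl
          rw [hz l i hl, zero_mul]
        · exact fun h => absurd (Finset.mem_univ _) h
      · rw [if_neg hij]
        apply Finset.sum_eq_zero
        intro l _
        by_cases hil : l = σ i
        · rw [hz l j (fun h => hij (σ.injective (hil.symm.trans h))), mul_zero]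
        · rw [hz l i hil, zero_mul]
end

section
/- Let ρ be a 2-representation of a group G in a 2-category C. Then the assignment g ↦ Tr(ρ(g)) extends to a functor from the inertia groupoid Λ(G) to Set: for f, g ∈ G there are bijections ψ_f(g) : Tr(ρ(f)) → Tr(ρ(gfg⁻¹)) satisfying ψ(gh) = ψ(g)∘ψ(h) and ψ(1) = id. -/
open CategoryTheory

universe v u

variable (G : Type*) [Group G] (V : Type u) [Category.{v} V]

/-- A 2-representation (categorical representation) of a group `G` on a category `V`:
functors `ρ(g)`, coherence isomorphisms `φ_{g,h} : ρ(g) ∘ ρ(h) ≅ ρ(gh)` and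
`φ₁ : ρ(1) ≅ id`, satisfying the associativity and unit conditions.
(`mult g h : rho h ⋙ rho g ≅ rho (g*h)` since `ρ(g) ∘ ρ(h)` applies `ρ(h)` first.) -/
structure TwoRep where
  rho : G → V ⥤ V
  mult : ∀ g h : G, rho h ⋙ rho g ≅ rho (g * h)
  unit : rho 1 ≅ 𝟭 V
  assoc : ∀ g h k : G,
    Functor.whiskerLeft (rho k) (mult g h).hom ≫ (mult (g * h) k).hom =
      Functor.whiskerRight (mult h k).hom (rho g) ≫ (mult g (h * k)).hom ≫
        eqToHom (show rho (g * (h * k)) = rho ((g * h) * k) by rw [mul_assoc])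
  unit_left : ∀ g : G,
    (mult 1 g).hom ≫ eqToHom (show rho (1 * g) = rho g by rw [one_mul]) =
      Functor.whiskerLeft (rho g) unit.hom ≫ (rho g).rightUnitor.hom
  unit_right : ∀ g : G,
    (mult g 1).hom ≫ eqToHom (show rho (g * 1) = rho g by rw [mul_one]) =
      Functor.whiskerRight unit.hom (rho g) ≫ (rho g).leftUnitor.hom

variable {G V}

/-- The conjugation map `ψ_f(g) : Tr(ρ(f)) → Tr(ρ(g f g⁻¹))` of categorical traces:
`φ ↦ Tr(φ_{g,f,g⁻¹}) ((ρ(g) ∘₀ φ ∘₀ ρ(g⁻¹)) ∘₁ u)` with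
`u = φ⁻¹_{g,g⁻¹} ∘₁ φ₁⁻¹ : id ⇒ ρ(g) ∘ ρ(g⁻¹)`. -/
def TwoRep.conj (R : TwoRep G V) (f g : G) (φ : 𝟭 V ⟶ R.rho f) :
    𝟭 V ⟶ R.rho (g * f * g⁻¹) :=
  R.unit.inv ≫
    eqToHom (show R.rho 1 = R.rho (g * g⁻¹) by simp) ≫
    (R.mult g g⁻¹).inv ≫
    Functor.whiskerLeft (R.rho g⁻¹) ((R.rho g).leftUnitor.inv ≫ Functor.whiskerRight φ (R.rho g)) ≫
    Functor.whiskerRight (R.mult f g⁻¹).hom (R.rho g) ≫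
    (R.mult g (f * g⁻¹)).hom ≫
    eqToHom (show R.rho (g * (f * g⁻¹)) = R.rho (g * f * g⁻¹) by rw [mul_assoc])

/-!
Whiskering a 2-cell `α : ρ(x) ⟶ ρ(y)` by `ρ(g)` on the left, resp. by `ρ(a)` on the right,
and transporting along `φ` gives 2-cells `ρ(gx) ⟶ ρ(gy)`, resp. `ρ(xa) ⟶ ρ(ya)`. These
translations are functorial, and up to `eqToHom` the cocycle condition makes them compose like
left and right multiplication in `G` and commute with each other, while the unit conditions make
translation by `1` trivial. Identifying `Tr(ρ(f))` with `ρ(1) ⟶ ρ(f)` through `φ₁`, the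
map `ψ_f(g)` is translation by `g` on the left and `g⁻¹` on the right, so
`ψ(gh) = ψ(g) ∘ ψ(h)` and `ψ(1) = id`; bijectivity then follows formally since every `g` is
invertible.
-/

namespace TwoRep

variable (R : TwoRep G V)

lemma mult_hom_naturality (g h : G) {X Y : V} (ψ : X ⟶ Y) :
    (R.rho g).map ((R.rho h).map ψ) ≫ (R.mult g h).hom.app Y =
      (R.mult g h).hom.app X ≫ (R.rho (g * h)).map ψ :=
  (R.mult g h).hom.naturality ψ

lemma mult_inv_app_congr {p q : G} (h : p = q) (g : G) (X : V) :
    (R.mult g p).inv.app X =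
      eqToHom (by rw [h]) ≫ (R.mult g q).inv.app X ≫ (R.rho g).map (eqToHom (by rw [h])) := by
  subst h; simp

lemma mult_hom_app_comp (g h k : G) (X : V) :
    (R.mult g h).hom.app ((R.rho k).obj X) ≫ (R.mult (g * h) k).hom.app X =
      (R.rho g).map ((R.mult h k).hom.app X) ≫ (R.mult g (h * k)).hom.app X ≫
        eqToHom (by rw [mul_assoc]) := by
  simpa [eqToHom_app] using NatTrans.congr_app (R.assoc g h k) X

lemma map_mult_hom_app_comp (g h k : G) (X : V) :
    (R.rho g).map ((R.mult h k).hom.app X) ≫ (R.mult g (h * k)).hom.app X =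
      (R.mult g h).hom.app ((R.rho k).obj X) ≫ (R.mult (g * h) k).hom.app X ≫
        eqToHom (by rw [mul_assoc]) := by
  rw [reassoc_of% mult_hom_app_comp]
  simp

lemma mult_inv_app_comp (g h k : G) (X : V) :
    (R.mult (g * h) k).inv.app X ≫ (R.mult g h).inv.app ((R.rho k).obj X) =
      eqToHom (by rw [mul_assoc]) ≫ (R.mult g (h * k)).inv.app X ≫
        (R.rho g).map ((R.mult h k).inv.app X) := by
  rw [← cancel_mono ((R.mult g h).hom.app ((R.rho k).obj X)),
    ← cancel_mono ((R.mult (g * h) k).hom.app X)]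
  simp [mult_hom_app_comp]

lemma mult_inv_app_comp_map (g h k : G) (X : V) :
    (R.mult g (h * k)).inv.app X ≫ (R.rho g).map ((R.mult h k).inv.app X) =
      eqToHom (by rw [mul_assoc]) ≫ (R.mult (g * h) k).inv.app X ≫
        (R.mult g h).inv.app ((R.rho k).obj X) := by
  rw [mult_inv_app_comp]
  simp

lemma mult_one_hom_app (g : G) (X : V) :
    (R.mult 1 g).hom.app X = R.unit.hom.app ((R.rho g).obj X) ≫ eqToHom (by simp) := by
  have h := NatTrans.congr_app (R.unit_left g) X
  simp only [NatTrans.comp_app, eqToHom_app, Functor.whiskerLeft_app,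
    Functor.rightUnitor_hom_app] at h
  rw [← reassoc_of% h]
  simp

lemma mult_one_inv_app (g : G) (X : V) :
    (R.mult 1 g).inv.app X = eqToHom (by simp) ≫ R.unit.inv.app ((R.rho g).obj X) := by
  rw [← cancel_mono ((R.mult 1 g).hom.app X), Iso.inv_hom_id_app, mult_one_hom_app]
  simp

lemma mult_hom_app_one (g : G) (X : V) :
    (R.mult g 1).hom.app X = (R.rho g).map (R.unit.hom.app X) ≫ eqToHom (by simp) := by
  have h := NatTrans.congr_app (R.unit_right g) X
  simp only [NatTrans.comp_app, eqToHom_app, Functor.whiskerRight_app,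
    Functor.leftUnitor_hom_app] at h
  rw [← reassoc_of% h]
  simp

lemma mult_inv_app_one (g : G) (X : V) :
    (R.mult g 1).inv.app X = eqToHom (by simp) ≫ (R.rho g).map (R.unit.inv.app X) := by
  rw [← cancel_mono ((R.mult g 1).hom.app X), Iso.inv_hom_id_app, mult_hom_app_one]
  simp [← Functor.map_comp_assoc]

def translateLeft (g : G) {x y : G} (α : R.rho x ⟶ R.rho y) : R.rho (g * x) ⟶ R.rho (g * y) :=
  (R.mult g x).inv ≫ Functor.whiskerRight α (R.rho g) ≫ (R.mult g y).hom

def translateRight (a : G) {x y : G} (α : R.rho x ⟶ R.rho y) : R.rho (x * a) ⟶ R.rho (y * a) :=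
  (R.mult x a).inv ≫ Functor.whiskerLeft (R.rho a) α ≫ (R.mult y a).hom

section Translation

variable {x y z : G}

@[simp]
lemma translateLeft_app (g : G) (α : R.rho x ⟶ R.rho y) (X : V) :
    (R.translateLeft g α).app X =
      (R.mult g x).inv.app X ≫ (R.rho g).map (α.app X) ≫ (R.mult g y).hom.app X := rfl

@[simp]
lemma translateRight_app (a : G) (α : R.rho x ⟶ R.rho y) (X : V) :
    (R.translateRight a α).app X =
      (R.mult x a).inv.app X ≫ α.app ((R.rho a).obj X) ≫ (R.mult y a).hom.app X := rfl

@[simp]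
lemma translateLeft_comp (g : G) (α : R.rho x ⟶ R.rho y) (β : R.rho y ⟶ R.rho z) :
    R.translateLeft g (α ≫ β) = R.translateLeft g α ≫ R.translateLeft g β := by
  ext X; simp

@[simp]
lemma translateRight_comp (a : G) (α : R.rho x ⟶ R.rho y) (β : R.rho y ⟶ R.rho z) :
    R.translateRight a (α ≫ β) = R.translateRight a α ≫ R.translateRight a β := by
  ext X; simp

@[simp]
lemma translateLeft_eqToHom (g : G) (h : x = y) (p : R.rho x = R.rho y) :
    R.translateLeft g (eqToHom p) = eqToHom (by rw [h]) := by
  subst h; ext X; simp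

@[simp]
lemma translateRight_eqToHom (a : G) (h : x = y) (p : R.rho x = R.rho y) :
    R.translateRight a (eqToHom p) = eqToHom (by rw [h]) := by
  subst h; ext X; simp

lemma translateRight_congr {a b : G} (h : a = b) (α : R.rho x ⟶ R.rho y) :
    R.translateRight a α =
      eqToHom (by rw [h]) ≫ R.translateRight b α ≫ eqToHom (by rw [h]) := by
  subst h; simp

lemma translateLeft_translateLeft (g h : G) (α : R.rho x ⟶ R.rho y) :
    R.translateLeft g (R.translateLeft h α) =
      eqToHom (by rw [mul_assoc]) ≫ R.translateLeft (g * h) α ≫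
        eqToHom (by rw [mul_assoc]) := by
  ext X
  simp [reassoc_of% mult_inv_app_comp_map, map_mult_hom_app_comp,
    reassoc_of% mult_hom_naturality]

lemma translateRight_translateRight (a b : G) (α : R.rho x ⟶ R.rho y) :
    R.translateRight a (R.translateRight b α) =
      eqToHom (by rw [mul_assoc]) ≫ R.translateRight (b * a) α ≫
        eqToHom (by rw [mul_assoc]) := by
  ext X
  simp [mult_hom_app_comp, reassoc_of% mult_inv_app_comp]

lemma translateRight_translateLeft (a g : G) (α : R.rho x ⟶ R.rho y) :
    R.translateRight a (R.translateLeft g α) =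
      eqToHom (by rw [mul_assoc]) ≫ R.translateLeft g (R.translateRight a α) ≫
        eqToHom (by rw [mul_assoc]) := by
  ext X
  simp [mult_hom_app_comp, reassoc_of% mult_inv_app_comp]

lemma translateLeft_one (α : R.rho x ⟶ R.rho y) :
    R.translateLeft 1 α = eqToHom (by rw [one_mul]) ≫ α ≫ eqToHom (by rw [one_mul]) := by
  ext X
  simp only [translateLeft_app, mult_one_hom_app, mult_one_inv_app, Category.assoc,
    NatTrans.comp_app, eqToHom_app]
  rw [R.unit.hom.naturality_assoc]
  simp

lemma translateRight_one (α : R.rho x ⟶ R.rho y) :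
    R.translateRight 1 α = eqToHom (by rw [mul_one]) ≫ α ≫ eqToHom (by rw [mul_one]) := by
  ext X
  simp [mult_hom_app_one, mult_inv_app_one]

end Translation

lemma conj_eq_translateLeft_translateRight (f g : G) (φ : 𝟭 V ⟶ R.rho f) :
    R.conj f g φ = R.unit.inv ≫ eqToHom (by simp) ≫
      R.translateLeft g (R.translateRight g⁻¹ (R.unit.hom ≫ φ)) ≫
        eqToHom (by rw [mul_assoc]) := by
  ext X
  simp [conj, mult_one_inv_app, R.mult_inv_app_congr (one_mul g⁻¹)]

lemma conj_mul (f g h : G) (φ : 𝟭 V ⟶ R.rho f) :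
    R.conj f (g * h) φ =
      R.conj (h * f * h⁻¹) g (R.conj f h φ) ≫ eqToHom (by simp [mul_assoc]) := by
  simp only [conj_eq_translateLeft_translateRight, Category.assoc, Iso.hom_inv_id_assoc]
  rw [R.translateRight_congr (mul_inv_rev g h)]
  -- the discharger proves the side conditions `x = y` of the `translate*_eqToHom` lemmas
  simp (disch := simp [mul_assoc]) [translateLeft_translateLeft, translateRight_translateRight,
    translateRight_translateLeft]

lemma conj_one (f : G) (φ : 𝟭 V ⟶ R.rho f) : R.conj f 1 φ = φ ≫ eqToHom (by simp) := by
  rw [conj_eq_translateLeft_translateRight, R.translateRight_congr inv_one, translateRight_one,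
    translateLeft_one]
  simp

lemma conj_congr {g g' : G} (h : g = g') (f : G) (φ : 𝟭 V ⟶ R.rho f) :
    R.conj f g φ = R.conj f g' φ ≫ eqToHom (by rw [h]) := by
  subst h; simp

lemma conj_comp_eqToHom {f f' : G} (h : f = f') (g : G) (φ : 𝟭 V ⟶ R.rho f) :
    R.conj f' g (φ ≫ eqToHom (by rw [h])) = R.conj f g φ ≫ eqToHom (by rw [h]) := by
  subst h; simp

lemma conj_conj_of_mul_eq_one {a g : G} (hag : a * g = 1) (f : G) (φ : 𝟭 V ⟶ R.rho f) :
    R.conj (g * f * g⁻¹) a (R.conj f g φ) =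
      φ ≫ eqToHom (by rw [eq_inv_of_mul_eq_one_left hag]; simp [mul_assoc]) := by
  have h := R.conj_mul f a g φ
  rw [R.conj_congr hag, conj_one] at h
  simpa using (comp_eqToHom_iff _ _ _).mp h.symm

lemma conj_bijective (f g : G) : Function.Bijective (R.conj f g) := by
  refine Function.bijective_iff_has_inverse.mpr
    ⟨fun ψ => R.conj (g * f * g⁻¹) g⁻¹ ψ ≫ eqToHom (by simp [mul_assoc]), fun φ => ?_,
      fun ψ => ?_⟩
  · simp [R.conj_conj_of_mul_eq_one (inv_mul_cancel g)]
  · simp [R.conj_comp_eqToHom (by simp [mul_assoc] : g⁻¹ * (g * f * g⁻¹) * g⁻¹⁻¹ = f),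
      R.conj_conj_of_mul_eq_one (mul_inv_cancel g)]

end TwoRep

/-- **The categorical character is a functor on the inertia groupoid.**
For a 2-representation `ρ` of `G`, the maps `ψ_f(g) : Tr(ρ(f)) → Tr(ρ(g f g⁻¹))` are
bijections satisfying `ψ(gh) = ψ(g) ∘ ψ(h)` and `ψ(1) = id`; that is, `g ↦ Tr(ρ(g))`
extends to a functor from the inertia groupoid `Λ(G)` to `Set`. -/
theorem twoCharacter_is_inertia_functor (R : TwoRep G V) :
    (∀ f g : G, Function.Bijective (R.conj f g)) ∧
    (∀ (f g h : G) (φ : 𝟭 V ⟶ R.rho f),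
      R.conj f (g * h) φ =
        R.conj (h * f * h⁻¹) g (R.conj f h φ) ≫
          eqToHom (show R.rho (g * (h * f * h⁻¹) * g⁻¹) = R.rho ((g * h) * f * (g * h)⁻¹) by
            rw [show g * (h * f * h⁻¹) * g⁻¹ = (g * h) * f * (g * h)⁻¹ by group])) ∧
    (∀ (f : G) (φ : 𝟭 V ⟶ R.rho f),
      R.conj f 1 φ = φ ≫ eqToHom (show R.rho f = R.rho (1 * f * 1⁻¹) by simp)) :=
  ⟨R.conj_bijective, R.conj_mul, R.conj_one⟩
end

section
/- Let α : H → G be a faithful functor of finite groupoids, x an object of G, g ∈ Hom_G(x,x), and ρ a representation of H with character χ. Then the character of the induced representation Ind_α(ρ) satisfies χ_ind(x,g) = Σ_{y ∈ Ob(H)} (1/|orbit_H(y)|)(1/|Aut_H(y)|) Σ_{s : x → α(y) in G, s g s⁻¹ ∈ α(Aut_H(y))} χ(y, α⁻¹(s g s⁻¹)), where the inner sum is over morphisms s of G from x to α(y) conjugating g into the image of Aut_H(y) under α. -/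
/-!
The value at `x` of the left Kan extension is the colimit of `ρ` over the comma groupoid `α ↓ x`,
whose objects are pairs `(y, f : α y ⟶ x)`. The sum of the colimit inclusions
`⨁_(y, f) ρ y → colim` has a section: send `v ∈ ρ y₀`, sitting at `f₀`, to the vector whose
`(y, f)`-component is `|{y₀ ⟶ _}|⁻¹ ∑_{h : y₀ ⟶ y, α h ≫ f = f₀} ρ h v`. Averaging over all
morphisms out of `y₀` is what makes this compatible with the colimit relations (and is where
characteristic `0` enters). So the trace of `g` on the colimit is the trace of its compression to
the direct sum, i.e. the sum of the traces of the diagonal blocks, and the `(y, f)`-block is the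
average of `ρ h` over the `h` with `α h ≫ f = f ≫ g`. Finally `|{y ⟶ _}| = |orbit y| · |Aut y|`.
-/

open CategoryTheory CategoryTheory.Limits

namespace LinearMap

variable {k : Type*} [Field k]

theorem trace_pi {ι : Type*} [Fintype ι] [DecidableEq ι] (N : ι → Type*)
    [∀ i, AddCommGroup (N i)] [∀ i, Module k (N i)] [∀ i, FiniteDimensional k (N i)]
    (f : (∀ i, N i) →ₗ[k] (∀ i, N i)) :
    trace k (∀ i, N i) f = ∑ i, trace k (N i) (proj i ∘ₗ f ∘ₗ single k N i) := by
  conv_lhs => rw [← f.id_comp, ← lsum_single k N k, lsum_apply, ← Module.End.mul_eq_comp,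
    Finset.sum_mul, map_sum]
  simp only [Module.End.mul_eq_comp, comp_assoc]
  exact Finset.sum_congr rfl fun i _ => trace_comp_comm' _ _

theorem trace_comp_comp_of_comp_eq_id {V W : Type*} [AddCommGroup V] [Module k V]
    [AddCommGroup W] [Module k W] [FiniteDimensional k W] {s : V →ₗ[k] W} {r : W →ₗ[k] V}
    (hrs : r ∘ₗ s = id) (u : V →ₗ[k] V) : trace k W (s ∘ₗ u ∘ₗ r) = trace k V u := by
  have : FiniteDimensional k V :=
    Module.Finite.of_surjective r fun v => ⟨s v, congr($hrs v)⟩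
  rw [trace_comp_comm', comp_assoc, hrs, comp_id]

end LinearMap

namespace CategoryTheory.Groupoid

variable {H : Type*} [Groupoid H] [Fintype H] [∀ y z : H, Fintype (y ⟶ z)]

theorem card_sigma_hom_congr {y y' : H} (e : y ⟶ y') :
    Fintype.card (Σ z, y ⟶ z) = Fintype.card (Σ z, y' ⟶ z) :=
  Fintype.card_congr (Equiv.sigmaCongrRight fun _ => (asIso e).homFromEquiv)

theorem card_sigma_hom_eq_mul (y : H) :
    Fintype.card (Σ z, y ⟶ z) = Nat.card {z : H // Nonempty (z ≅ y)} * Nat.card (y ⟶ y) := by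
  classical
  have hfiber (z : H) :
      Fintype.card (y ⟶ z) = if Nonempty (z ≅ y) then Fintype.card (y ⟶ y) else 0 := by
    split_ifs with h
    · exact Fintype.card_congr ((Iso.refl y).homCongr h.some)
    · exact Fintype.card_eq_zero_iff.mpr ⟨fun f => h ⟨(asIso f).symm⟩⟩
  rw [Fintype.card_sigma, Finset.sum_congr rfl fun z _ => hfiber z, ← Finset.sum_filter,
    Finset.sum_const, smul_eq_mul, Nat.card_eq_fintype_card, Nat.card_eq_fintype_card,
    Fintype.card_subtype]

end CategoryTheory.Groupoid

namespace CategoryTheory.CostructuredArrow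

variable {k : Type} [Field k] {H G : Type} [Groupoid H] [Category G]
  (α : H ⥤ G) (ρ : H ⥤ ModuleCat.{0} k) (x : G)

section

variable [Fintype H] [∀ y : H, Fintype (α.obj y ⟶ x)]

noncomputable def sumColimitι : (∀ p : Σ y, α.obj y ⟶ x, ρ.obj p.1) →ₗ[k]
    (colimit (proj α x ⋙ ρ) : ModuleCat k) :=
  ∑ p, (colimit.ι (proj α x ⋙ ρ) (mk p.2)).hom ∘ₗ LinearMap.proj p

theorem sumColimitι_single [DecidableEq H] [∀ a b : G, DecidableEq (a ⟶ b)]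
    (p : Σ y, α.obj y ⟶ x) (v : ρ.obj p.1) :
    sumColimitι α ρ x (Pi.single p v) = (colimit.ι (proj α x ⋙ ρ) (mk p.2)).hom v :=
  LinearMap.lsum_piSingle k (fun p : Σ y, α.obj y ⟶ x => ρ.obj p.1) k
    (fun p => (colimit.ι (proj α x ⋙ ρ) (mk p.2)).hom) p v

end

variable [∀ y z : H, Fintype (y ⟶ z)] [∀ a b : G, DecidableEq (a ⟶ b)]

noncomputable def averageComponent (j : CostructuredArrow α x) (p : Σ y, α.obj y ⟶ x) :
    ρ.obj j.left →ₗ[k] ρ.obj p.1 :=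
  ∑ h : j.left ⟶ p.1, if α.map h ≫ p.2 = j.hom then (ρ.map h).hom else 0

variable {α ρ x} in
theorem averageComponent_comp_map {j j' : CostructuredArrow α x} (φ : j ⟶ j')
    (p : Σ y, α.obj y ⟶ x) :
    averageComponent α ρ x j' p ∘ₗ (ρ.map φ.left).hom = averageComponent α ρ x j p := by
  ext v
  simp only [averageComponent, LinearMap.comp_apply, LinearMap.sum_apply]
  refine Fintype.sum_equiv (asIso φ.left).symm.homFromEquiv _ _ fun h => ?_
  have hcond : α.map (φ.left ≫ h) ≫ p.2 = j.hom ↔ α.map h ≫ p.2 = j'.hom := by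
    rw [α.map_comp, Category.assoc, ← CostructuredArrow.w φ, cancel_epi]
  simp only [Iso.homFromEquiv_apply, Iso.symm_inv, asIso_hom, hcond, ρ.map_comp]
  split_ifs <;> rfl

variable [Fintype H]

noncomputable def average (j : CostructuredArrow α x) :
    ρ.obj j.left →ₗ[k] ∀ p : Σ y, α.obj y ⟶ x, ρ.obj p.1 :=
  (Fintype.card (Σ z, j.left ⟶ z) : k)⁻¹ • LinearMap.pi (averageComponent α ρ x j)

variable {α ρ x} in
theorem average_comp_map {j j' : CostructuredArrow α x} (φ : j ⟶ j') :
    average α ρ x j' ∘ₗ (ρ.map φ.left).hom = average α ρ x j := by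
  simp only [average, LinearMap.smul_comp, LinearMap.pi_comp, averageComponent_comp_map,
    Groupoid.card_sigma_hom_congr φ.left]

noncomputable def averageCocone : Cocone (proj α x ⋙ ρ) where
  pt := ModuleCat.of k (∀ p : Σ y, α.obj y ⟶ x, ρ.obj p.1)
  ι.app j := ModuleCat.ofHom (average α ρ x j)
  ι.naturality _ _ φ := by
    ext1
    exact average_comp_map φ

theorem desc_averageCocone_ι (j : CostructuredArrow α x) (v : ρ.obj j.left) :
    (colimit.desc (proj α x ⋙ ρ) (averageCocone α ρ x)).hom
      ((colimit.ι (proj α x ⋙ ρ) j).hom v) = average α ρ x j v :=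
  congr($(colimit.ι_desc (averageCocone α ρ x) j).hom v)

variable [∀ y : H, Fintype (α.obj y ⟶ x)]

variable {α x} in
theorem sum_sum_ite_map_comp_eq_card_smul (j : CostructuredArrow α x) {M : Type*} [AddCommMonoid M]
    (w : M) :
    ∑ p : Σ y, α.obj y ⟶ x, ∑ h : j.left ⟶ p.1, (if α.map h ≫ p.2 = j.hom then w else 0) =
      Fintype.card (Σ z, j.left ⟶ z) • w := by
  rw [Fintype.sum_sigma, Fintype.card_sigma, Finset.sum_smul]
  refine Finset.sum_congr rfl fun y _ => ?_
  change ∑ f : α.obj y ⟶ x, ∑ h : j.left ⟶ y, _ = _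
  rw [Finset.sum_comm]
  simp only [← IsIso.eq_inv_comp, Finset.sum_ite_eq', Finset.mem_univ, if_true,
    Finset.sum_const, Finset.card_univ]

variable [CharZero k]

theorem sumColimitι_average (j : CostructuredArrow α x) (v : ρ.obj j.left) :
    sumColimitι α ρ x (average α ρ x j v) = (colimit.ι (proj α x ⋙ ρ) j).hom v := by
  have hι (p : Σ y, α.obj y ⟶ x) (h : j.left ⟶ p.1) (hh : α.map h ≫ p.2 = j.hom) :
      (colimit.ι (proj α x ⋙ ρ) (mk p.2)).hom ((ρ.map h).hom v) =
        (colimit.ι (proj α x ⋙ ρ) j).hom v :=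
    congr($(colimit.w (proj α x ⋙ ρ) (homMk h hh : j ⟶ mk p.2)).hom v)
  have hsum : sumColimitι α ρ x (LinearMap.pi (averageComponent α ρ x j) v) =
      ∑ p : Σ y, α.obj y ⟶ x, ∑ h : j.left ⟶ p.1,
        (if α.map h ≫ p.2 = j.hom then (colimit.ι (proj α x ⋙ ρ) j).hom v else 0) := by
    rw [sumColimitι, LinearMap.sum_apply]
    refine Finset.sum_congr rfl fun p _ => ?_
    change (colimit.ι (proj α x ⋙ ρ) (mk p.2)).hom (averageComponent α ρ x j p v) = _
    rw [averageComponent, LinearMap.sum_apply]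
    refine (map_sum _ _ _).trans (Finset.sum_congr rfl fun h _ => ?_)
    split_ifs with hh
    · exact hι p h hh
    · exact map_zero _
  have hcard : (Fintype.card (Σ z, j.left ⟶ z) : k) ≠ 0 :=
    Nat.cast_ne_zero.mpr (Fintype.card_pos_iff.mpr ⟨⟨j.left, 𝟙 _⟩⟩).ne'
  rw [average, LinearMap.smul_apply, map_smul, hsum, sum_sum_ite_map_comp_eq_card_smul,
    ← Nat.cast_smul_eq_nsmul k, inv_smul_smul₀ hcard]

theorem sumColimitι_comp_desc_averageCocone :
    sumColimitι α ρ x ∘ₗ (colimit.desc (proj α x ⋙ ρ) (averageCocone α ρ x)).hom =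
      LinearMap.id := by
  have hext : ModuleCat.ofHom (sumColimitι α ρ x ∘ₗ
      (colimit.desc (proj α x ⋙ ρ) (averageCocone α ρ x)).hom) = 𝟙 _ :=
    colimit.hom_ext fun j => by
      ext v
      exact (congrArg _ (desc_averageCocone_ι α ρ x j v)).trans (sumColimitι_average α ρ x j v)
  exact congr($(hext).hom)

variable [∀ y : H, FiniteDimensional k (ρ.obj y)]

instance finiteDimensional_colimit :
    FiniteDimensional k (colimit (proj α x ⋙ ρ) : ModuleCat k) :=
  Module.Finite.of_surjective (sumColimitι α ρ x) fun c =>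
    ⟨_, congr($(sumColimitι_comp_desc_averageCocone α ρ x) c)⟩

variable {α ρ x} in
theorem trace_eq_of_apply_ι {g : x ⟶ x}
    (u : (colimit (proj α x ⋙ ρ) : ModuleCat k) →ₗ[k] (colimit (proj α x ⋙ ρ) : ModuleCat k))
    (hu : ∀ (y : H) (f : α.obj y ⟶ x) (v : ρ.obj y),
      u ((colimit.ι (proj α x ⋙ ρ) (mk f)).hom v) = (colimit.ι (proj α x ⋙ ρ) (mk (f ≫ g))).hom v) :
    LinearMap.trace k _ u = ∑ y : H, (Fintype.card (Σ z, y ⟶ z) : k)⁻¹ *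
      ∑ f : α.obj y ⟶ x, ∑ h : y ⟶ y,
        if α.map h ≫ f = f ≫ g then LinearMap.trace k _ (ρ.map h).hom else 0 := by
  classical
  set d := (colimit.desc (proj α x ⋙ ρ) (averageCocone α ρ x)).hom
  rw [← LinearMap.trace_comp_comp_of_comp_eq_id (sumColimitι_comp_desc_averageCocone α ρ x),
    LinearMap.trace_pi, Fintype.sum_sigma]
  refine Finset.sum_congr rfl fun y _ => ?_
  rw [Finset.mul_sum]
  refine Finset.sum_congr rfl fun f _ => ?_
  have hblock :
      LinearMap.proj ⟨y, f⟩ ∘ₗ (d ∘ₗ u ∘ₗ sumColimitι α ρ x) ∘ₗ LinearMap.single k _ ⟨y, f⟩ =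
        (Fintype.card (Σ z, y ⟶ z) : k)⁻¹ • averageComponent α ρ x (mk (f ≫ g)) ⟨y, f⟩ := by
    ext v
    change d (u (sumColimitι α ρ x (Pi.single ⟨y, f⟩ v))) ⟨y, f⟩ = _
    rw [sumColimitι_single, hu, desc_averageCocone_ι]
    rfl
  rw [hblock, map_smul, smul_eq_mul, averageComponent, map_sum]
  simp only [apply_ite (LinearMap.trace k _), map_zero]
  rfl

end CategoryTheory.CostructuredArrow

namespace CategoryTheory.Functor

open CostructuredArrow

variable {k : Type} [Field k] [CharZero k] {H G : Type} [Groupoid H] [Category G] [Fintype H]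
  [∀ y z : H, Fintype (y ⟶ z)] [∀ a b : G, DecidableEq (a ⟶ b)]
  (α : H ⥤ G) (ρ : H ⥤ ModuleCat.{0} k) [∀ y : H, FiniteDimensional k (ρ.obj y)]
  {x : G} [∀ y : H, Fintype (α.obj y ⟶ x)]

theorem trace_leftKanExtension_map (g : x ⟶ x) :
    LinearMap.trace k _ ((α.leftKanExtension ρ).map g).hom =
      ∑ y : H, (Fintype.card (Σ z, y ⟶ z) : k)⁻¹ *
        ∑ f : α.obj y ⟶ x, ∑ h : y ⟶ y,
          if α.map h ≫ f = f ≫ g then LinearMap.trace k _ (ρ.map h).hom else 0 := by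
  let e := α.leftKanExtensionObjIsoColimit ρ x
  rw [← LinearMap.trace_conj' _ e.toLinearEquiv]
  refine trace_eq_of_apply_ι _ fun y f v => ?_
  have hι : colimit.ι (proj α x ⋙ ρ) (CostructuredArrow.mk f) ≫ e.inv ≫
      (α.leftKanExtension ρ).map g ≫ e.hom =
        colimit.ι (proj α x ⋙ ρ) (CostructuredArrow.mk (f ≫ g)) := by
    simp only [e, ι_leftKanExtensionObjIsoColimit_inv_assoc, ← Functor.map_comp_assoc]
    exact ι_leftKanExtensionObjIsoColimit_hom α ρ x (CostructuredArrow.mk (f ≫ g))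
  exact congr($(hι).hom v)

end CategoryTheory.Functor

open CategoryTheory

/-- **Character of a representation induced along a faithful functor of finite groupoids.**
Let `α : H ⥤ G` be a faithful functor of finite groupoids, `ρ` a finite-dimensional
representation of `H` over a field `k` of characteristic `0`, and let
`Ind_α ρ = k[G] ⊗_{k[H]} ρ` be the induced representation (realized as the left Kan
extension of `ρ` along `α`).  For an object `x` of `G` and `g ∈ Hom_G(x,x)`,
`χ_ind(x,g) = ∑_{y ∈ Ob H} |orbit_H(y)|⁻¹ |Aut_H(y)|⁻¹
  ∑_{s : x ⟶ α(y)} ∑_{h : y ⟶ y, α(h) = s g s⁻¹} χ(y, h)`,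
the inner sum ranging (by faithfulness of `α`) over the unique preimage under `α` of
`s g s⁻¹` in `Aut_H(y)`, whenever it exists. -/
theorem character_of_induced_groupoid_rep
    (k : Type) [Field k] [CharZero k]
    (H G : Type) [Groupoid H] [Groupoid G]
    [Fintype H] [Fintype G]
    [∀ x y : H, Fintype (x ⟶ y)] [∀ x y : G, Fintype (x ⟶ y)]
    [∀ a b : G, DecidableEq (a ⟶ b)]
    (α : H ⥤ G) [α.Faithful]
    (ρ : H ⥤ ModuleCat.{0} k) [∀ y : H, FiniteDimensional k (ρ.obj y)]
    (x : G) (g : x ⟶ x) :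
    LinearMap.trace k ((α.lan.obj ρ).obj x) ((α.lan.obj ρ).map g).hom =
      ∑ y : H,
        (Nat.card { z : H // Nonempty (z ≅ y) } : k)⁻¹ * (Nat.card (y ⟶ y) : k)⁻¹ *
          ∑ s : x ⟶ α.obj y, ∑ h : y ⟶ y,
            if α.map h = Groupoid.inv s ≫ g ≫ s then
              LinearMap.trace k (ρ.obj y) (ρ.map h).hom
            else 0 := by
  rw [show α.lan.obj ρ = α.leftKanExtension ρ from rfl, Functor.trace_leftKanExtension_map]
  refine Finset.sum_congr rfl fun y _ => ?_
  rw [Groupoid.card_sigma_hom_eq_mul, Nat.cast_mul, mul_inv]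
  congr 1
  refine Fintype.sum_equiv Groupoid.invEquiv _ _ fun f => Finset.sum_congr rfl fun h _ => ?_
  simp only [Groupoid.invEquiv_apply, Groupoid.inv_eq_inv, IsIso.inv_inv, ← Category.assoc,
    IsIso.eq_comp_inv]
end
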